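/- arXiv:2210.14092 — 3 statements merged into one kernel-verified Lean document; each statement's English description precedes it below -/
import Mathlib

section
/- If X̃₁ and X̃₂ are two fuzzy incidence graphs such that their join X̃ = X̃₁ ⊕ X̃₂ is a strong fuzzy incidence graph, then both X̃₁ and X̃₂ are strong fuzzy incidence graphs. -/
open scoped BigOperators

/-- A fuzzy incidence graph on a finite vertex type `V`.  An (undirected, loopless) edge `xy`
is encoded by the symmetric membership function `rho`, and the incidence pair `(x, xy)`
is encoded by `eta x y` (so `eta x y` is the membership value of the pair consisting of the
vertex `x` and the edge joining `x` and `y`). All membership values lie in `[0,1]`,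
`rho xy ≤ min (eps x) (eps y)` and `eta (x, xy) ≤ min (eps x) (rho xy)`. -/
structure FIG (V : Type) [Fintype V] [DecidableEq V] where
  eps : V → ℝ
  rho : V → V → ℝ
  eta : V → V → ℝ
  eps_nonneg : ∀ x, 0 ≤ eps x
  eps_le_one : ∀ x, eps x ≤ 1
  rho_nonneg : ∀ x y, 0 ≤ rho x y
  rho_symm : ∀ x y, rho x y = rho y x
  rho_le : ∀ x y, rho x y ≤ min (eps x) (eps y)
  rho_irrefl : ∀ x, rho x x = 0
  eta_nonneg : ∀ x y, 0 ≤ eta x y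
  eta_le : ∀ x y, eta x y ≤ min (eps x) (rho x y)

namespace FIG

variable {V V₁ V₂ : Type} [Fintype V] [DecidableEq V]
  [Fintype V₁] [DecidableEq V₁] [Fintype V₂] [DecidableEq V₂]

/-- `(x, xy)` is a pair of the fuzzy incidence graph (i.e. belongs to the support `η*`). -/
def IsPair (G : FIG V) (x y : V) : Prop := 0 < G.eta x y

/-- the minimum of the two pair weights along one edge step of an incidence path -/
def pairMin (G : FIG V) (a b : V) : ℝ := min (G.eta a b) (G.eta b a)

/-- the minimum of the pair weights along the internal steps of a vertex list -/
def chainStrength (G : FIG V) : List V → ℝ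
  | [] => 1
  | [_] => 1
  | a :: b :: l => min (G.pairMin a b) (G.chainStrength (b :: l))

/-- The set of incidence strengths of incidence paths from the vertex `x` to the edge `yz`:
a path is recorded by its (pairwise distinct) sequence of vertices, starting at `x` and ending
at an endpoint of the edge `yz`; its strength is the minimum of the weights of its pairs
(pairs of weight `0` are not genuine pairs, but a list using them has strength `0`, so
including such lists does not alter the supremum below). -/
def pathStrengths (G : FIG V) (x y z : V) : Set ℝ :=
  {s | ∃ l : List V, l.Nodup ∧ l.head? = some x ∧
      ((l.getLast? = some y ∧ s = min (G.chainStrength l) (G.eta y z)) ∨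
       (l.getLast? = some z ∧ s = min (G.chainStrength l) (G.eta z y)))}

/-- `ICONN G x y z` is the greatest incidence strength of an incidence path from the
vertex `x` to the edge `yz` (the incidence connectivity `ICONN_G (x, yz)`). -/
noncomputable def ICONN (G : FIG V) (x y z : V) : ℝ := sSup (G.pathStrengths x y z)

/-- the fuzzy incidence graph obtained by deleting the pair `(a, ab)` -/
def deletePair (G : FIG V) (a b : V) : FIG V where
  eps := G.eps
  rho := G.rho
  eta := fun u v => if u = a ∧ v = b then 0 else G.eta u v
  eps_nonneg := G.eps_nonneg
  eps_le_one := G.eps_le_one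
  rho_nonneg := G.rho_nonneg
  rho_symm := G.rho_symm
  rho_le := G.rho_le
  rho_irrefl := G.rho_irrefl
  eta_nonneg := by
    intro u v; (try dsimp only); split
    · exact le_refl 0
    · exact G.eta_nonneg u v
  eta_le := by
    intro u v; (try dsimp only); split
    · exact le_min (G.eps_nonneg u) (G.rho_nonneg u v)
    · exact G.eta_le u v

/-- The pair `(x, xy)` is strong: its weight is at least the incidence connectivity
between `x` and the edge `xy` in the graph obtained by deleting the pair `(x, xy)`. -/
def IsStrongPair (G : FIG V) (x y : V) : Prop :=
  (G.deletePair x y).ICONN x x y ≤ G.eta x y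

/-- a strong fuzzy incidence graph: every pair is strong -/
def Strong (G : FIG V) : Prop := ∀ x y, G.IsPair x y → G.IsStrongPair x y

/-- The pair `(x, xy)` is effective: `η(x, xy) = min (ε x) (ρ xy)`. -/
def EffectivePair (G : FIG V) (x y : V) : Prop :=
  G.eta x y = min (G.eps x) (G.rho x y)

/-- a fuzzy incidence graph in which every pair is effective -/
def EffectivePairs (G : FIG V) : Prop := ∀ x y, G.IsPair x y → G.EffectivePair x y

/-- The join `G₁ ⊕ G₂` of two fuzzy incidence graphs on disjoint vertex sets:
every vertex of `G₁` is additionally joined to every vertex of `G₂` by an edge of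
weight `min (ε₁ a) (ε₂ b)`, and a pair `(a, ab)` on a join edge has weight
`min (ε₁ a) (ε₂ b) (η(a, avᵢ))` taking the appropriate incident pair of largest weight. -/
noncomputable def join (G₁ : FIG V₁) (G₂ : FIG V₂) : FIG (V₁ ⊕ V₂) where
  eps := Sum.elim G₁.eps G₂.eps
  rho := fun p q =>
    match p, q with
    | .inl a, .inl b => G₁.rho a b
    | .inr a, .inr b => G₂.rho a b
    | .inl a, .inr b => min (G₁.eps a) (G₂.eps b)
    | .inr b, .inl a => min (G₁.eps a) (G₂.eps b)
  eta := fun p q =>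
    match p, q with
    | .inl a, .inl b => G₁.eta a b
    | .inr a, .inr b => G₂.eta a b
    | .inl a, .inr b => min (G₁.eps a) (min (G₂.eps b) (sSup (Set.range (G₁.eta a))))
    | .inr b, .inl a => min (G₁.eps a) (min (G₂.eps b) (sSup (Set.range (G₂.eta b))))
  eps_nonneg := by rintro (a | a) <;> simp [G₁.eps_nonneg, G₂.eps_nonneg]
  eps_le_one := by rintro (a | a) <;> simp [G₁.eps_le_one, G₂.eps_le_one]
  rho_nonneg := by
    rintro (a | a) (b | b) <;> dsimp only
    · exact G₁.rho_nonneg a b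
    · exact le_min (G₁.eps_nonneg a) (G₂.eps_nonneg b)
    · exact le_min (G₁.eps_nonneg b) (G₂.eps_nonneg a)
    · exact G₂.rho_nonneg a b
  rho_symm := by
    rintro (a | a) (b | b) <;>
      first
        | exact G₁.rho_symm _ _
        | exact G₂.rho_symm _ _
        | rfl
  rho_le := by
    rintro (a | a) (b | b) <;> dsimp only
    · exact G₁.rho_le a b
    · exact le_min (min_le_left _ _) (min_le_right _ _)
    · exact le_min (min_le_right _ _) (min_le_left _ _)
    · exact G₂.rho_le a b
  rho_irrefl := by
    rintro (a | a) <;> dsimp only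
    · exact G₁.rho_irrefl a
    · exact G₂.rho_irrefl a
  eta_nonneg := by
    rintro (a | a) (b | b) <;> dsimp only
    · exact G₁.eta_nonneg a b
    · refine le_min (G₁.eps_nonneg a) (le_min (G₂.eps_nonneg b) ?_)
      exact Real.sSup_nonneg (by rintro x ⟨v, rfl⟩; exact G₁.eta_nonneg a v)
    · refine le_min (G₁.eps_nonneg b) (le_min (G₂.eps_nonneg a) ?_)
      exact Real.sSup_nonneg (by rintro x ⟨v, rfl⟩; exact G₂.eta_nonneg a v)
    · exact G₂.eta_nonneg a b
  eta_le := by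
    rintro (a | a) (b | b) <;> dsimp only
    · exact G₁.eta_le a b
    · exact le_min (min_le_left _ _)
        (le_min (min_le_left _ _) (min_le_of_right_le (min_le_left _ _)))
    · exact le_min (min_le_of_right_le (min_le_left _ _))
        (le_min (min_le_left _ _) (min_le_of_right_le (min_le_left _ _)))
    · exact G₂.eta_le a b

/-! Each factor sits inside the join via an injective map that preserves `η`, and this survives
deleting a pair. Incidence paths of a factor are therefore incidence paths of the join with the
same strength, so `ICONN` can only grow on passing to the join, and strength of a pair in the join
is inherited by the factor. -/

section Embedding

variable {W : Type} [Fintype W] [DecidableEq W]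

lemma chainStrength_le_one (G : FIG V) : ∀ l : List V, G.chainStrength l ≤ 1
  | [] => le_rfl
  | [_] => le_rfl
  | _ :: b :: l => (min_le_right _ _).trans (chainStrength_le_one G (b :: l))

lemma pathStrengths_nonempty (G : FIG V) (x y z : V) : (G.pathStrengths x y z).Nonempty := by
  by_cases hxy : x = y
  · subst hxy
    exact ⟨_, [x], List.nodup_singleton x, rfl, Or.inl ⟨rfl, rfl⟩⟩
  · exact ⟨_, [x, y], by simp [hxy], rfl, Or.inl ⟨by simp, rfl⟩⟩

lemma pathStrengths_bddAbove (G : FIG V) (x y z : V) : BddAbove (G.pathStrengths x y z) := by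
  refine ⟨1, ?_⟩
  rintro s ⟨l, -, -, ⟨-, rfl⟩ | ⟨-, rfl⟩⟩ <;>
    exact (min_le_left _ _).trans (chainStrength_le_one G l)

variable {G : FIG V} {H : FIG W} {f : V ↪ W}

lemma chainStrength_map (hf : ∀ u v, H.eta (f u) (f v) = G.eta u v) :
    ∀ l : List V, H.chainStrength (l.map f) = G.chainStrength l
  | [] => rfl
  | [_] => rfl
  | a :: b :: l => by
    have ih := chainStrength_map hf (b :: l)
    simp only [List.map_cons, chainStrength, pairMin, hf] at ih ⊢
    rw [ih]

lemma pathStrengths_subset_of_embedding (hf : ∀ u v, H.eta (f u) (f v) = G.eta u v)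
    (x y z : V) : G.pathStrengths x y z ⊆ H.pathStrengths (f x) (f y) (f z) := by
  rintro s ⟨l, hnd, hhd, ⟨hlast, rfl⟩ | ⟨hlast, rfl⟩⟩ <;>
    refine ⟨l.map f, hnd.map f.injective, by simp [hhd], ?_⟩
  · exact Or.inl ⟨by simp [hlast], by rw [chainStrength_map hf, hf]⟩
  · exact Or.inr ⟨by simp [hlast], by rw [chainStrength_map hf, hf]⟩

lemma ICONN_le_of_embedding (hf : ∀ u v, H.eta (f u) (f v) = G.eta u v) (x y z : V) :
    G.ICONN x y z ≤ H.ICONN (f x) (f y) (f z) :=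
  csSup_le_csSup (pathStrengths_bddAbove H _ _ _) (pathStrengths_nonempty G x y z)
    (pathStrengths_subset_of_embedding hf x y z)

lemma deletePair_eta_embedding (hf : ∀ u v, H.eta (f u) (f v) = G.eta u v) (a b u v : V) :
    (H.deletePair (f a) (f b)).eta (f u) (f v) = (G.deletePair a b).eta u v := by
  simp only [deletePair, f.injective.eq_iff, hf]

lemma IsStrongPair.of_embedding (hf : ∀ u v, H.eta (f u) (f v) = G.eta u v) {x y : V}
    (hs : H.IsStrongPair (f x) (f y)) : G.IsStrongPair x y := by
  unfold IsStrongPair at hs ⊢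
  calc (G.deletePair x y).ICONN x x y
      ≤ (H.deletePair (f x) (f y)).ICONN (f x) (f x) (f y) :=
        ICONN_le_of_embedding (deletePair_eta_embedding hf x y) x x y
    _ ≤ H.eta (f x) (f y) := hs
    _ = G.eta x y := hf x y

lemma Strong.of_embedding (hf : ∀ u v, H.eta (f u) (f v) = G.eta u v) (hH : H.Strong) :
    G.Strong := fun x y hxy =>
  IsStrongPair.of_embedding hf (hH _ _ (show 0 < H.eta (f x) (f y) from hf x y ▸ hxy))

end Embedding

/-- **Proposition 8.** If the join of two fuzzy incidence graphs is a strong fuzzy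
incidence graph, then both factors are strong fuzzy incidence graphs. -/
theorem strong_of_join_strong (G₁ : FIG V₁) (G₂ : FIG V₂)
    (h : (G₁.join G₂).Strong) : G₁.Strong ∧ G₂.Strong :=
  ⟨Strong.of_embedding (f := .inl) (fun _ _ => rfl) h,
    Strong.of_embedding (f := .inr) (fun _ _ => rfl) h⟩

end FIG
end

section
/- Let X̃₁ and X̃₂ be fuzzy incidence graphs such that for each vertex u of X̃ᵢ (i = 1,2), all pairs incident at u have equal η-weight. Then the join X̃₁ ⊕ X̃₂ is a strong fuzzy incidence graph. -/
open scoped BigOperators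

namespace FIG

variable {V V₁ V₂ : Type} [Fintype V] [DecidableEq V]
  [Fintype V₁] [DecidableEq V₁] [Fintype V₂] [DecidableEq V₂]

/-! An incidence path from `x` to the edge `xy` that avoids the pair `(x, xy)` must leave `x`
through some pair `(x, xw)` and end with the pair `(y, xy)`, so `(x, xy)` is strong as soon as
`min (η (x, xw)) (η (y, xy)) ≤ η (x, xy)` for every `w`. In the join this holds for a factor edge
because all pairs at `x` weigh `η (x, xy)`, and for a join edge `ab` because
`η (a, ab) = min (ε a) (ε b) (max_v η₁ (a, av))` while `η (a, aw) ≤ max_v η₁ (a, av)` and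
`η (b, ab) ≤ min (ε a) (ε b)`. -/

def IncidentPairsEq (G : FIG V) : Prop :=
  ∀ x y z, G.IsPair x y → G.IsPair x z → G.eta x y = G.eta x z

lemma IsPair.ne {G : FIG V} {x y : V} (h : G.IsPair x y) : x ≠ y := by
  rintro rfl
  have : G.eta x x ≤ 0 := (G.eta_le x x).trans ((min_le_right _ _).trans_eq (G.rho_irrefl x))
  exact h.not_ge this

lemma chainStrength_cons_cons_le_eta (G : FIG V) (a b : V) (l : List V) :
    G.chainStrength (a :: b :: l) ≤ G.eta a b :=
  (min_le_left _ _).trans (min_le_left _ _)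

lemma deletePair_eta_le (G : FIG V) (a b u v : V) : (G.deletePair a b).eta u v ≤ G.eta u v := by
  simp only [deletePair]
  split
  · exact G.eta_nonneg u v
  · exact le_rfl

@[simp]
lemma deletePair_eta_self (G : FIG V) (a b : V) : (G.deletePair a b).eta a b = 0 := by
  simp [deletePair]

lemma deletePair_eta_of_ne_left (G : FIG V) {a b u : V} (hu : u ≠ a) (v : V) :
    (G.deletePair a b).eta u v = G.eta u v := by
  simp [deletePair, hu]

lemma exists_eq_cons_cons_of_head?_of_getLast? {α : Type*} {l : List α} {x y : α}
    (hhead : l.head? = some x) (hlast : l.getLast? = some y) (hxy : x ≠ y) :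
    ∃ w t, l = x :: w :: t := by
  rcases l with _ | ⟨a, _ | ⟨w, t⟩⟩
  · simp at hhead
  · simp_all
  · simp only [List.head?_cons, Option.some.injEq] at hhead
    exact ⟨w, t, by rw [hhead]⟩

lemma isStrongPair_of_forall_min_le (G : FIG V) {x y : V} (hxy : x ≠ y)
    (h : ∀ w, min (G.eta x w) (G.eta y x) ≤ G.eta x y) : G.IsStrongPair x y := by
  refine Real.sSup_le ?_ (G.eta_nonneg x y)
  rintro s ⟨l, -, hhead, ⟨-, rfl⟩ | ⟨hlast, rfl⟩⟩
  · calc min ((G.deletePair x y).chainStrength l) ((G.deletePair x y).eta x y)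
        ≤ 0 := (min_le_right _ _).trans_eq (G.deletePair_eta_self x y)
      _ ≤ G.eta x y := G.eta_nonneg x y
  · obtain ⟨w, t, rfl⟩ := exists_eq_cons_cons_of_head?_of_getLast? hhead hlast hxy
    calc min ((G.deletePair x y).chainStrength (x :: w :: t)) ((G.deletePair x y).eta y x)
        ≤ min (G.eta x w) (G.eta y x) :=
          min_le_min (((G.deletePair x y).chainStrength_cons_cons_le_eta x w t).trans
            (G.deletePair_eta_le x y x w)) (G.deletePair_eta_of_ne_left hxy.symm x).le
      _ ≤ G.eta x y := h w

lemma eta_le_iSup_eta (G : FIG V) (x y : V) : G.eta x y ≤ ⨆ z, G.eta x z :=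
  le_ciSup (Set.finite_range _).bddAbove y

lemma IncidentPairsEq.iSup_eta_le {G : FIG V} (hG : G.IncidentPairsEq) {x y : V}
    (hxy : G.IsPair x y) : ⨆ z, G.eta x z ≤ G.eta x y := by
  have : Nonempty V := ⟨x⟩
  refine ciSup_le fun z => ?_
  rcases (G.eta_nonneg x z).lt_or_eq with hxz | hxz
  · exact (hG x z y hxz hxy).le
  · exact hxz ▸ hxy.le

section Join

variable (G₁ : FIG V₁) (G₂ : FIG V₂)

lemma join_eta_inl_le_iSup (a : V₁) (w : V₁ ⊕ V₂) :
    (G₁.join G₂).eta (.inl a) w ≤ ⨆ z, G₁.eta a z := by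
  rcases w with c | d
  · exact G₁.eta_le_iSup_eta a c
  · exact min_le_of_right_le (min_le_right _ _)

lemma join_eta_inr_le_iSup (b : V₂) (w : V₁ ⊕ V₂) :
    (G₁.join G₂).eta (.inr b) w ≤ ⨆ z, G₂.eta b z := by
  rcases w with c | d
  · exact min_le_of_right_le (min_le_right _ _)
  · exact G₂.eta_le_iSup_eta b d

lemma join_eta_inl_inr_le (a : V₁) (b : V₂) :
    (G₁.join G₂).eta (.inl a) (.inr b) ≤ min (G₁.eps a) (G₂.eps b) :=
  min_le_min le_rfl (min_le_left _ _)

lemma join_eta_inr_inl_le (a : V₁) (b : V₂) :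
    (G₁.join G₂).eta (.inr b) (.inl a) ≤ min (G₁.eps a) (G₂.eps b) :=
  min_le_min le_rfl (min_le_left _ _)

lemma join_min_eta_inl_inr_le (a : V₁) (b : V₂) (w : V₁ ⊕ V₂) :
    min ((G₁.join G₂).eta (.inl a) w) ((G₁.join G₂).eta (.inr b) (.inl a)) ≤
      (G₁.join G₂).eta (.inl a) (.inr b) := by
  have hw := G₁.join_eta_inl_le_iSup G₂ a w
  have hba := G₁.join_eta_inr_inl_le G₂ a b
  exact le_min (min_le_of_right_le (hba.trans (min_le_left _ _)))
    (le_min (min_le_of_right_le (hba.trans (min_le_right _ _))) (min_le_of_left_le hw))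

lemma join_min_eta_inr_inl_le (a : V₁) (b : V₂) (w : V₁ ⊕ V₂) :
    min ((G₁.join G₂).eta (.inr b) w) ((G₁.join G₂).eta (.inl a) (.inr b)) ≤
      (G₁.join G₂).eta (.inr b) (.inl a) := by
  have hw := G₁.join_eta_inr_le_iSup G₂ b w
  have hab := G₁.join_eta_inl_inr_le G₂ a b
  exact le_min (min_le_of_right_le (hab.trans (min_le_left _ _)))
    (le_min (min_le_of_right_le (hab.trans (min_le_right _ _))) (min_le_of_left_le hw))

end Join

lemma join_min_eta_le {G₁ : FIG V₁} {G₂ : FIG V₂} (h₁ : G₁.IncidentPairsEq)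
    (h₂ : G₂.IncidentPairsEq) {p q : V₁ ⊕ V₂} (hpq : (G₁.join G₂).IsPair p q) (w : V₁ ⊕ V₂) :
    min ((G₁.join G₂).eta p w) ((G₁.join G₂).eta q p) ≤ (G₁.join G₂).eta p q := by
  rcases p with a | b <;> rcases q with a' | b'
  · exact min_le_of_left_le ((G₁.join_eta_inl_le_iSup G₂ a w).trans (h₁.iSup_eta_le hpq))
  · exact G₁.join_min_eta_inl_inr_le G₂ a b' w
  · exact G₁.join_min_eta_inr_inl_le G₂ a' b w
  · exact min_le_of_left_le ((G₁.join_eta_inr_le_iSup G₂ b w).trans (h₂.iSup_eta_le hpq))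

/-- **Theorem 10.** If in each factor, at every vertex all incident pairs have equal
weight, then the join of the two fuzzy incidence graphs is a strong fuzzy incidence
graph. -/
theorem join_strong_of_forall_incident_pairs_eq (G₁ : FIG V₁) (G₂ : FIG V₂)
    (h₁ : ∀ x y z : V₁, G₁.IsPair x y → G₁.IsPair x z → G₁.eta x y = G₁.eta x z)
    (h₂ : ∀ x y z : V₂, G₂.IsPair x y → G₂.IsPair x z → G₂.eta x y = G₂.eta x z) :
    (G₁.join G₂).Strong := fun _ _ hpq =>
  isStrongPair_of_forall_min_le _ hpq.ne (join_min_eta_le h₁ h₂ hpq)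

end FIG
end

section
/- Let X̃₁ and X̃₂ be fuzzy incidence graphs such that there exists an edge a₁a₂ ∈ E₁ whose pair weights satisfy η₁(a₁,a₁a₂) ≥ ε₂(v) and η₁(a₂,a₁a₂) ≥ ε₂(v) for some vertex v ∈ V₂. Then in the Cartesian product X̃₁ × X̃₂ the pairs ((a₁,v),(a₁,v)(a₂,v)) and ((a₂,v),(a₁,v)(a₂,v)) are effective pairs. -/
open scoped BigOperators

namespace FIG

variable {V V₁ V₂ : Type} [Fintype V] [DecidableEq V]
  [Fintype V₁] [DecidableEq V₁] [Fintype V₂] [DecidableEq V₂]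

/-- The Cartesian product of two fuzzy incidence graphs: `(a₁,b₁)(a₂,b₂)` is an edge
when `a₁ = a₂` and `b₁b₂ ∈ E₂`, or `b₁ = b₂` and `a₁a₂ ∈ E₁`; a pair of the product
exists when both corresponding pairs of the factor exist. -/
noncomputable def cartesian (G₁ : FIG V₁) (G₂ : FIG V₂) : FIG (V₁ × V₂) where
  eps := fun p => min (G₁.eps p.1) (G₂.eps p.2)
  rho := fun p q =>
    if p.1 = q.1 then min (G₁.eps p.1) (G₂.rho p.2 q.2)
    else if p.2 = q.2 then min (G₁.rho p.1 q.1) (G₂.eps p.2)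
    else 0
  eta := fun p q =>
    if p.1 = q.1 then
      (if 0 < G₂.eta p.2 q.2 ∧ 0 < G₂.eta q.2 p.2 then
        min (G₁.eps p.1) (G₂.eta p.2 q.2) else 0)
    else if p.2 = q.2 then
      (if 0 < G₁.eta p.1 q.1 ∧ 0 < G₁.eta q.1 p.1 then
        min (G₁.eta p.1 q.1) (G₂.eps p.2) else 0)
    else 0
  eps_nonneg := fun p => le_min (G₁.eps_nonneg p.1) (G₂.eps_nonneg p.2)
  eps_le_one := fun p => min_le_of_left_le (G₁.eps_le_one p.1)
  rho_nonneg := by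
    intro p q; (try dsimp only); split
    · exact le_min (G₁.eps_nonneg _) (G₂.rho_nonneg _ _)
    · split
      · exact le_min (G₁.rho_nonneg _ _) (G₂.eps_nonneg _)
      · exact le_refl 0
  rho_symm := by
    intro p q; (try dsimp only)
    by_cases h1 : p.1 = q.1
    · simp [h1, G₂.rho_symm p.2 q.2]
    · by_cases h2 : p.2 = q.2
      · simp [h1, Ne.symm h1, h2, G₁.rho_symm p.1 q.1]
      · simp [h1, Ne.symm h1, h2, Ne.symm h2]
  rho_le := by
    intro p q; (try dsimp only); split
    · rename_i h1
      refine le_min (le_min (min_le_left _ _) (min_le_of_right_le ?_))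
        (le_min (h1 ▸ min_le_left _ _) (min_le_of_right_le ?_))
      · exact le_trans (G₂.rho_le p.2 q.2) (min_le_left _ _)
      · exact le_trans (G₂.rho_le p.2 q.2) (min_le_right _ _)
    · split
      · rename_i h1 h2
        refine le_min (le_min (min_le_of_left_le ?_) (min_le_right _ _))
          (le_min (min_le_of_left_le ?_) (h2 ▸ min_le_right _ _))
        · exact le_trans (G₁.rho_le p.1 q.1) (min_le_left _ _)
        · exact le_trans (G₁.rho_le p.1 q.1) (min_le_right _ _)
      · exact le_min (le_min (G₁.eps_nonneg _) (G₂.eps_nonneg _))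
          (le_min (G₁.eps_nonneg _) (G₂.eps_nonneg _))
  rho_irrefl := by
    intro p; (try dsimp only)
    rw [if_pos rfl, G₂.rho_irrefl]
    exact min_eq_right (G₁.eps_nonneg p.1)
  eta_nonneg := by
    intro p q; (try dsimp only); split
    · split
      · exact le_min (G₁.eps_nonneg _) (G₂.eta_nonneg _ _)
      · exact le_refl 0
    · split
      · split
        · exact le_min (G₁.eta_nonneg _ _) (G₂.eps_nonneg _)
        · exact le_refl 0
      · exact le_refl 0
  eta_le := by
    intro p q; (try dsimp only); split
    · split
      · refine le_min (le_min (min_le_left _ _) (min_le_of_right_le ?_))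
          (le_min (min_le_left _ _) (min_le_of_right_le ?_))
        · exact le_trans (G₂.eta_le p.2 q.2) (min_le_left _ _)
        · exact le_trans (G₂.eta_le p.2 q.2) (min_le_right _ _)
      · exact le_min (le_min (G₁.eps_nonneg _) (G₂.eps_nonneg _))
          (le_min (G₁.eps_nonneg _) (G₂.rho_nonneg _ _))
    · split
      · split
        · refine le_min (le_min (min_le_of_left_le ?_) (min_le_right _ _))
            (le_min (min_le_of_left_le ?_) (min_le_right _ _))
          · exact le_trans (G₁.eta_le p.1 q.1) (min_le_left _ _)
          · exact le_trans (G₁.eta_le p.1 q.1) (min_le_right _ _)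
        · exact le_min (le_min (G₁.eps_nonneg _) (G₂.eps_nonneg _))
            (le_min (G₁.rho_nonneg _ _) (G₂.eps_nonneg _))
      · exact le_min (le_min (G₁.eps_nonneg _) (G₂.eps_nonneg _)) (le_refl 0)

theorem eta_self (G : FIG V) (x : V) : G.eta x x = 0 :=
  le_antisymm ((G.eta_le x x).trans (min_le_of_right_le (G.rho_irrefl x).le)) (G.eta_nonneg x x)

theorem effectivePair_of_eps_le_eta {G : FIG V} {x y : V} (h : G.eps x ≤ G.eta x y) :
    G.EffectivePair x y :=
  le_antisymm (G.eta_le x y) ((min_le_left _ _).trans h)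

theorem cartesian_eta_of_snd_eq (G₁ : FIG V₁) (G₂ : FIG V₂) {a₁ a₂ : V₁} (v : V₂)
    (hne : a₁ ≠ a₂) (h₁ : 0 < G₁.eta a₁ a₂) (h₂ : 0 < G₁.eta a₂ a₁) :
    (G₁.cartesian G₂).eta (a₁, v) (a₂, v) = min (G₁.eta a₁ a₂) (G₂.eps v) := by
  simp only [cartesian, if_neg hne, if_pos trivial, if_pos (And.intro h₁ h₂)]

theorem cartesian_eps_le_eta_of_eps_le (G₁ : FIG V₁) (G₂ : FIG V₂) {a₁ a₂ : V₁} {v : V₂}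
    (h₁ : G₂.eps v ≤ G₁.eta a₁ a₂) (h₂ : G₂.eps v ≤ G₁.eta a₂ a₁) :
    (G₁.cartesian G₂).eps (a₁, v) ≤ (G₁.cartesian G₂).eta (a₁, v) (a₂, v) := by
  have heps : (G₁.cartesian G₂).eps (a₁, v) ≤ G₂.eps v := min_le_right _ _
  rcases (G₂.eps_nonneg v).eq_or_lt with hv | hv
  · exact heps.trans (hv ▸ (G₁.cartesian G₂).eta_nonneg _ _)
  · have hne : a₁ ≠ a₂ := by
      rintro rfl
      exact (hv.trans_le h₁).ne' (G₁.eta_self a₁)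
    rw [cartesian_eta_of_snd_eq G₁ G₂ v hne (hv.trans_le h₁) (hv.trans_le h₂), min_eq_right h₁]
    exact heps

theorem cartesian_effectivePair_of_eps_le_general (G₁ : FIG V₁) (G₂ : FIG V₂)
    (a₁ a₂ : V₁) (v : V₂)
    (h₁ : G₂.eps v ≤ G₁.eta a₁ a₂) (h₂ : G₂.eps v ≤ G₁.eta a₂ a₁) :
    (G₁.cartesian G₂).EffectivePair (a₁, v) (a₂, v) ∧
      (G₁.cartesian G₂).EffectivePair (a₂, v) (a₁, v) :=
  ⟨effectivePair_of_eps_le_eta (cartesian_eps_le_eta_of_eps_le G₁ G₂ h₁ h₂),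
    effectivePair_of_eps_le_eta (cartesian_eps_le_eta_of_eps_le G₁ G₂ h₂ h₁)⟩

/-- **Proposition 23.** If `a₁a₂` is an edge of `G₁` whose two pair weights are at least
`ε₂ v` for some vertex `v` of `G₂`, then in the Cartesian product the two pairs on the
edge `(a₁,v)(a₂,v)` are effective. -/
theorem cartesian_effectivePair_of_eps_le (G₁ : FIG V₁) (G₂ : FIG V₂)
    (a₁ a₂ : V₁) (v : V₂) (he : 0 < G₁.rho a₁ a₂)
    (h₁ : G₂.eps v ≤ G₁.eta a₁ a₂) (h₂ : G₂.eps v ≤ G₁.eta a₂ a₁) :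
    (G₁.cartesian G₂).EffectivePair (a₁, v) (a₂, v) ∧
      (G₁.cartesian G₂).EffectivePair (a₂, v) (a₁, v) :=
  cartesian_effectivePair_of_eps_le_general G₁ G₂ a₁ a₂ v h₁ h₂

end FIG
end
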